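/- If z ∈ ℝ^n is a 2D depth profile with corner set C (indices i with z_{i-1} - 2z_i + z_{i+1} ≠ 0), and the sample set M includes every corner index together with both adjacent indices (i-1, i, i+1 for each corner i), then the submatrix (D^T)_{M^c, I} is zero, where I is the support of Dz; consequently the exact-recovery constant C_er = ‖((D^T)_{M^c,J})^† (D^T)_{M^c,I}‖_{∞→∞} equals 0. -/
import Mathlib


open Matrix Classical

/-- The (n-2)×n second-order difference operator: (Dz)_i = z_i - 2 z_{i+1} + z_{i+2}. -/
def Dmat (n : ℕ) : Matrix (Fin (n - 2)) (Fin n) ℝ :=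
  fun i j =>
    if (j : ℕ) = (i : ℕ) then 1
    else if (j : ℕ) = (i : ℕ) + 1 then -2
    else if (j : ℕ) = (i : ℕ) + 2 then 1
    else 0

/-- If the sample set M contains every corner of z together with both of its neighbors,
    then the submatrix (Dᵀ)_{Mᶜ, I} (I = supp(Dz)) is zero; consequently the
    exact-recovery constant C_er = ‖((Dᵀ)_{Mᶜ,J})† (Dᵀ)_{Mᶜ,I}‖_{∞→∞} is 0 (every row
    ℓ₁-norm of P · (Dᵀ)_{Mᶜ,I} vanishes, for any matrix P — in particular the pseudoinverse). -/
theorem stmt9 (n : ℕ) (z : Fin n → ℝ) (M : Finset (Fin n))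
    (hM : ∀ i : Fin (n - 2), (Dmat n).mulVec z i ≠ 0 →
      (⟨(i : ℕ), by have := i.isLt; omega⟩ : Fin n) ∈ M ∧
      (⟨(i : ℕ) + 1, by have := i.isLt; omega⟩ : Fin n) ∈ M ∧
      (⟨(i : ℕ) + 2, by have := i.isLt; omega⟩ : Fin n) ∈ M) :
    (∀ j : Fin n, j ∉ M → ∀ i : Fin (n - 2), (Dmat n).mulVec z i ≠ 0 → Dmat n i j = 0) ∧
    (∀ (P : Matrix (Fin (n - 2)) {j : Fin n // j ∉ M} ℝ) (r : Fin (n - 2)),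
      ∑ i : Fin (n - 2),
        |∑ j : {j : Fin n // j ∉ M},
          P r j * (if (Dmat n).mulVec z i ≠ 0 then Dmat n i j.1 else 0)| = 0) := by
  have key : ∀ j : Fin n, j ∉ M → ∀ i : Fin (n - 2),
      (Dmat n).mulVec z i ≠ 0 → Dmat n i j = 0 := by
    intro j hj i hi
    obtain ⟨h0, h1, h2⟩ := hM i hi
    unfold Dmat
    split_ifs with a b c
    · exact absurd (by rwa [show j = (⟨(i : ℕ), by have := i.isLt; omega⟩ : Fin n) from
        Fin.ext a]) hj
    · exact absurd (by rwa [show j = (⟨(i : ℕ) + 1, by have := i.isLt; omega⟩ : Fin n) from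
        Fin.ext b]) hj
    · exact absurd (by rwa [show j = (⟨(i : ℕ) + 2, by have := i.isLt; omega⟩ : Fin n) from
        Fin.ext c]) hj
    · rfl
  refine ⟨key, fun P r => ?_⟩
  apply Finset.sum_eq_zero
  intro i _
  rw [show (∑ j : {j : Fin n // j ∉ M},
      P r j * (if (Dmat n).mulVec z i ≠ 0 then Dmat n i j.1 else 0)) = 0 from ?_, abs_zero]
  apply Finset.sum_eq_zero
  intro j _
  by_cases h : (Dmat n).mulVec z i ≠ 0
  · rw [if_pos h, key j.1 j.2 i h, mul_zero]
  · rw [if_neg h, mul_zero]
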